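/- Let L_t be a time-dependent GKSL generator with Hermitian jump operators satisfying Condition Q with bound M. Then for any ε > 0, δ > 0 and t0 ≥ 0, there exists an infinite sequence of mutually disjoint time intervals [t_n, t_n + δ] (n = 1, 2, …) such that | λ_n − λ_0 | < ε δ e^{Mδ} for every n, where λ_n = |||V_{t_n, t_n + δ}|||₂′ and λ_0 = |||V_{t_0, t_0 + δ}|||₂′. -/

import Mathlib

open Matrix Filter
open scoped ComplexOrder

attribute [local instance] Matrix.normedAddCommGroup Matrix.normedSpace

noncomputable def hsNorm {d : ℕ} (A : Matrix (Fin d) (Fin d) ℂ) : ℝ :=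
  Real.sqrt ((Matrix.trace (Aᴴ * A)).re)

noncomputable def opNorm2 {d : ℕ}
    (Φ : Matrix (Fin d) (Fin d) ℂ → Matrix (Fin d) (Fin d) ℂ) : ℝ :=
  sSup {r : ℝ | ∃ A, hsNorm A = 1 ∧ r = hsNorm (Φ A)}

noncomputable def gksl {d M : ℕ} (H : ℝ → Matrix (Fin d) (Fin d) ℂ)
    (L : Fin M → ℝ → Matrix (Fin d) (Fin d) ℂ) (t : ℝ)
    (ρ : Matrix (Fin d) (Fin d) ℂ) : Matrix (Fin d) (Fin d) ℂ :=
  (-Complex.I) • (H t * ρ - ρ * H t) +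
    ∑ m : Fin M, (L m t * ρ * L m t - (2⁻¹ : ℂ) • ((L m t) ^ 2 * ρ + ρ * (L m t) ^ 2))

def CondQ {d : ℕ}
    (ℒ : ℝ → Matrix (Fin d) (Fin d) ℂ → Matrix (Fin d) (Fin d) ℂ) : Prop :=
  (∀ t0 : ℝ, 0 ≤ t0 → ∀ ε > (0 : ℝ), ∃ δ > (0 : ℝ), ∀ t : ℝ, 0 ≤ t → |t - t0| < δ →
      opNorm2 (fun A => ℒ t A - ℒ t0 A) < ε) ∧
  (∃ M > (0 : ℝ), ∀ t : ℝ, 0 ≤ t → opNorm2 (ℒ t) ≤ M) ∧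
  (∀ ε > (0 : ℝ), ∀ δ > (0 : ℝ), ∀ t0 : ℝ, 0 ≤ t0 →
    ∃ ts : ℕ → ℝ, (∀ n, 0 ≤ ts n) ∧ (∀ n, ts n + δ < ts (n + 1)) ∧
      ∀ n, ∀ t ∈ Set.Icc (0 : ℝ) δ,
        opNorm2 (fun A => ℒ (ts n + t) A - ℒ (t0 + t) A) < ε)


section AuxLemmas

lemma trace_re_eq {d : ℕ} (A : Matrix (Fin d) (Fin d) ℂ) :
    (Matrix.trace (Aᴴ * A)).re = ∑ i, ∑ j, ‖A i j‖^2 := by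
  simp only [Matrix.trace, Matrix.mul_apply, Matrix.conjTranspose_apply, Matrix.diag,
    Complex.re_sum]
  rw [Finset.sum_comm]
  congr 1; ext i; congr 1; ext j
  have := Complex.normSq_eq_norm_sq (A i j)
  simp [Complex.mul_re, Complex.normSq_apply, ← this, Complex.star_def,
    Complex.conj_re, Complex.conj_im]

lemma hsNorm_eq {d : ℕ} (A : Matrix (Fin d) (Fin d) ℂ) :
    hsNorm A = Real.sqrt (∑ i, ∑ j, ‖A i j‖^2) := by
  rw [hsNorm, trace_re_eq]

lemma hsNorm_nonneg' {d : ℕ} (A : Matrix (Fin d) (Fin d) ℂ) : 0 ≤ hsNorm A :=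
  Real.sqrt_nonneg _

lemma hsNorm_smul {d : ℕ} (c : ℂ) (A : Matrix (Fin d) (Fin d) ℂ) :
    hsNorm (c • A) = ‖c‖ * hsNorm A := by
  rw [hsNorm_eq, hsNorm_eq]
  have : ∀ i j, ‖(c • A) i j‖^2 = ‖c‖^2 * ‖A i j‖^2 := by
    intro i j; simp [Matrix.smul_apply, norm_smul]; ring
  simp only [this, ← Finset.mul_sum]
  rw [Real.sqrt_mul (by positivity), Real.sqrt_sq (norm_nonneg c)]

lemma hsNorm_pos {d : ℕ} {A : Matrix (Fin d) (Fin d) ℂ} (h : A ≠ 0) : 0 < hsNorm A := by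
  rw [hsNorm_eq, Real.sqrt_pos]
  obtain ⟨i, j, hij⟩ : ∃ i j, A i j ≠ 0 := by
    by_contra hc; push_neg at hc; exact h (by ext i j; simp [hc])
  apply Finset.sum_pos' (fun k _ => Finset.sum_nonneg (fun l _ => by positivity))
  exact ⟨i, Finset.mem_univ i, Finset.sum_pos' (fun l _ => by positivity)
    ⟨j, Finset.mem_univ j, pow_pos (norm_pos_iff.mpr hij) 2⟩⟩

lemma norm_le_hsNorm {d : ℕ} (A : Matrix (Fin d) (Fin d) ℂ) : ‖A‖ ≤ hsNorm A := by
  rw [Matrix.norm_le_iff (hsNorm_nonneg' A)]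
  intro i j
  rw [hsNorm_eq]
  have h2 : ‖A i j‖^2 ≤ ∑ j, ‖A i j‖^2 :=
    Finset.single_le_sum (f := fun j => ‖A i j‖^2) (fun k _ => by positivity) (Finset.mem_univ j)
  have h3 : ∑ j, ‖A i j‖^2 ≤ ∑ i, ∑ j, ‖A i j‖^2 :=
    Finset.single_le_sum (f := fun i => ∑ j, ‖A i j‖^2) (fun k _ => by positivity) (Finset.mem_univ i)
  have := Real.sqrt_le_sqrt (h2.trans h3)
  rwa [Real.sqrt_sq (norm_nonneg _)] at this

lemma hsNorm_le {d : ℕ} (A : Matrix (Fin d) (Fin d) ℂ) : hsNorm A ≤ d * ‖A‖ := by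
  rw [hsNorm_eq]
  have : ∑ i, ∑ j, ‖A i j‖^2 ≤ ∑ _i : Fin d, ∑ _j : Fin d, ‖A‖^2 := by
    apply Finset.sum_le_sum; intro i _; apply Finset.sum_le_sum; intro j _
    exact pow_le_pow_left₀ (norm_nonneg _) (Matrix.norm_entry_le_entrywise_sup_norm A) 2
  simp only [Finset.sum_const, Finset.card_univ, Fintype.card_fin, nsmul_eq_mul] at this
  calc Real.sqrt (∑ i, ∑ j, ‖A i j‖^2) ≤ Real.sqrt ((d:ℝ) * ((d:ℝ) * ‖A‖^2)) := Real.sqrt_le_sqrt this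
    _ = d * ‖A‖ := by
        rw [← mul_assoc, show (d:ℝ) * d * ‖A‖^2 = (d * ‖A‖)^2 by ring, Real.sqrt_sq (by positivity)]

lemma continuous_hsNorm {d : ℕ} : Continuous (hsNorm (d := d)) := by
  have : (hsNorm (d := d)) = fun A => Real.sqrt (∑ i, ∑ j, ‖A i j‖^2) := by
    ext A; exact hsNorm_eq A
  rw [this]
  apply Real.continuous_sqrt.comp
  apply continuous_finset_sum; intro i _
  apply continuous_finset_sum; intro j _
  exact ((continuous_apply j).comp (continuous_apply i)).norm.pow 2

noncomputable def euc {d : ℕ} (A : Matrix (Fin d) (Fin d) ℂ) :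
    EuclideanSpace ℂ (Fin d × Fin d) :=
  (WithLp.equiv 2 _).symm (fun p => A p.1 p.2)

lemma hsNorm_eq_euc {d : ℕ} (A : Matrix (Fin d) (Fin d) ℂ) : hsNorm A = ‖euc A‖ := by
  rw [hsNorm_eq, EuclideanSpace.norm_eq]
  congr 1
  rw [Fintype.sum_prod_type]
  rfl

lemma abs_hsNorm_sub_hsNorm_le {d : ℕ} (A B : Matrix (Fin d) (Fin d) ℂ) :
    |hsNorm A - hsNorm B| ≤ hsNorm (A - B) := by
  rw [hsNorm_eq_euc, hsNorm_eq_euc, hsNorm_eq_euc,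
    show euc (A - B) = euc A - euc B from rfl]
  exact abs_norm_sub_norm_le _ _

lemma gksl_smul {d M : ℕ} (H : ℝ → Matrix (Fin d) (Fin d) ℂ)
    (L : Fin M → ℝ → Matrix (Fin d) (Fin d) ℂ) (t : ℝ) (c : ℂ) (X : Matrix (Fin d) (Fin d) ℂ) :
    gksl H L t (c • X) = c • gksl H L t X := by
  simp only [gksl, Matrix.mul_smul, Matrix.smul_mul, smul_sub, smul_add, smul_smul,
    Finset.smul_sum, mul_comm c]

lemma gksl_sub {d M : ℕ} (H : ℝ → Matrix (Fin d) (Fin d) ℂ)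
    (L : Fin M → ℝ → Matrix (Fin d) (Fin d) ℂ) (t : ℝ) (X Y : Matrix (Fin d) (Fin d) ℂ) :
    gksl H L t (X - Y) = gksl H L t X - gksl H L t Y := by
  simp only [gksl, Matrix.mul_sub, Matrix.sub_mul, smul_sub, smul_add,
    Finset.sum_sub_distrib, Finset.sum_add_distrib, neg_smul, one_smul, neg_neg]
  abel

lemma gksl_continuous {d M : ℕ} (H : ℝ → Matrix (Fin d) (Fin d) ℂ)
    (L : Fin M → ℝ → Matrix (Fin d) (Fin d) ℂ) (t : ℝ) :
    Continuous (gksl H L t) := by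
  unfold gksl
  fun_prop

lemma isCompact_hsSphere {d : ℕ} :
    IsCompact {A : Matrix (Fin d) (Fin d) ℂ | hsNorm A = 1} := by
  apply Metric.isCompact_of_isClosed_isBounded
  · exact isClosed_eq continuous_hsNorm continuous_const
  · apply Bornology.IsBounded.subset
      (Metric.isBounded_closedBall (x := (0:Matrix (Fin d) (Fin d) ℂ)) (r := 1))
    intro A hA
    simp only [Metric.mem_closedBall, dist_zero_right]
    exact (norm_le_hsNorm A).trans_eq hA

lemma bddAbove_opSet {d : ℕ} {Φ : Matrix (Fin d) (Fin d) ℂ → Matrix (Fin d) (Fin d) ℂ}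
    (hΦ : Continuous Φ) :
    BddAbove {r : ℝ | ∃ A, hsNorm A = 1 ∧ r = hsNorm (Φ A)} := by
  have : {r : ℝ | ∃ A, hsNorm A = 1 ∧ r = hsNorm (Φ A)} =
      (fun A => hsNorm (Φ A)) '' {A | hsNorm A = 1} := by
    ext r; constructor
    · rintro ⟨A, h1, rfl⟩; exact ⟨A, h1, rfl⟩
    · rintro ⟨A, h1, rfl⟩; exact ⟨A, h1, rfl⟩
  rw [this]
  exact (isCompact_hsSphere.image (continuous_hsNorm.comp hΦ)).bddAbove

lemma opNorm2_pointwise {d : ℕ} {Φ : Matrix (Fin d) (Fin d) ℂ → Matrix (Fin d) (Fin d) ℂ}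
    (hΦ : Continuous Φ) (hhom : ∀ (c : ℂ) X, Φ (c • X) = c • Φ X)
    {C : ℝ} (hC : opNorm2 Φ ≤ C) (X : Matrix (Fin d) (Fin d) ℂ) :
    hsNorm (Φ X) ≤ C * hsNorm X := by
  rcases eq_or_ne X 0 with rfl | hX
  · have h0 : Φ 0 = 0 := by simpa using hhom 0 0
    have hz : hsNorm (0 : Matrix (Fin d) (Fin d) ℂ) = 0 := by
      simp [hsNorm, Matrix.trace]
    rw [h0]; simp [hz]
  · have hp := hsNorm_pos hX
    set c : ℂ := (((hsNorm X)⁻¹ : ℝ) : ℂ) with hc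
    have hcn : ‖c‖ = (hsNorm X)⁻¹ := by
      rw [hc, Complex.norm_real, Real.norm_eq_abs, abs_of_nonneg (inv_nonneg.mpr hp.le)]
    have hA : hsNorm (c • X) = 1 := by
      rw [hsNorm_smul, hcn, inv_mul_cancel₀ (ne_of_gt hp)]
    have hmem : hsNorm (Φ (c • X)) ∈ {r : ℝ | ∃ A, hsNorm A = 1 ∧ r = hsNorm (Φ A)} :=
      ⟨c • X, hA, rfl⟩
    have hle := le_csSup (bddAbove_opSet hΦ) hmem
    rw [hhom, hsNorm_smul, hcn] at hle
    have hfin : (hsNorm X)⁻¹ * hsNorm (Φ X) ≤ C := le_trans hle hC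
    calc hsNorm (Φ X) = hsNorm X * ((hsNorm X)⁻¹ * hsNorm (Φ X)) := by
          field_simp
      _ ≤ hsNorm X * C := mul_le_mul_of_nonneg_left hfin (le_of_lt hp)
      _ = C * hsNorm X := mul_comm _ _

lemma hasDerivAt_shift {E : Type*} [NormedAddCommGroup E] [NormedSpace ℝ E]
    (f : ℝ → E) (f' : E) (s t : ℝ) (h : HasDerivAt f f' (s + t)) :
    HasDerivAt (fun τ => f (s + τ)) f' t := by
  have h2 : HasDerivAt (fun τ : ℝ => s + τ) 1 t := (hasDerivAt_id t).const_add s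
  simpa [Function.comp_def] using h.scomp t h2

end AuxLemmas


def IsDensity {d : ℕ} (ρ : Matrix (Fin d) (Fin d) ℂ) : Prop :=
  ρ.PosSemidef ∧ Matrix.trace ρ = 1


noncomputable def hsNormSq {d : ℕ} (A : Matrix (Fin d) (Fin d) ℂ) : ℝ :=
  (Matrix.trace (Aᴴ * A)).re

noncomputable def opNorm2' {d : ℕ}
    (Φ : Matrix (Fin d) (Fin d) ℂ → Matrix (Fin d) (Fin d) ℂ) : ℝ :=
  sSup {r : ℝ | ∃ A, hsNorm A = 1 ∧ Matrix.trace A = 0 ∧ r = hsNorm (Φ A)}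

/-- The adjoint operation on a time-dependent family of matrices:
`ad(A)_t = i[H_t, A_t] + ∂_t A_t`. -/
noncomputable def adOp {d : ℕ} (H : ℝ → Matrix (Fin d) (Fin d) ℂ)
    (A : ℝ → Matrix (Fin d) (Fin d) ℂ) : ℝ → Matrix (Fin d) (Fin d) ℂ :=
  fun t => Complex.I • (H t * A t - A t * H t) + deriv A t

/-- `n`-fold application of the adjoint operation to a family of matrices. -/
noncomputable def adPow {d : ℕ} (H : ℝ → Matrix (Fin d) (Fin d) ℂ) :
    ℕ → (ℝ → Matrix (Fin d) (Fin d) ℂ) → (ℝ → Matrix (Fin d) (Fin d) ℂ)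
  | 0, A => A
  | n + 1, A => adOp H (adPow H n A)


/-- recurrence of the restricted spectral norms of the propagator
under Condition Q with bound `M0`. -/
theorem stmt6 {d M : ℕ} (hd : 0 < d)
    (H : ℝ → Matrix (Fin d) (Fin d) ℂ)
    (L : Fin M → ℝ → Matrix (Fin d) (Fin d) ℂ)
    (hH : ∀ t : ℝ, 0 ≤ t → (H t).IsHermitian)
    (hL : ∀ m, ∀ t : ℝ, 0 ≤ t → (L m t).IsHermitian)
    (M0 : ℝ) (hM0 : 0 < M0)
    (hcont : ∀ t0 : ℝ, 0 ≤ t0 → ∀ ε > (0 : ℝ), ∃ δ > (0 : ℝ),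
      ∀ t : ℝ, 0 ≤ t → |t - t0| < δ →
        opNorm2 (fun A => gksl H L t A - gksl H L t0 A) < ε)
    (hbound : ∀ t : ℝ, 0 ≤ t → opNorm2 (gksl H L t) ≤ M0)
    (hquasi : ∀ ε > (0 : ℝ), ∀ δ > (0 : ℝ), ∀ t0 : ℝ, 0 ≤ t0 →
      ∃ ts : ℕ → ℝ, (∀ n, 0 ≤ ts n) ∧ (∀ n, ts n + δ < ts (n + 1)) ∧
        ∀ n, ∀ t ∈ Set.Icc (0 : ℝ) δ,
          opNorm2 (fun A => gksl H L (ts n + t) A - gksl H L (t0 + t) A) < ε)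
    (V : ℝ → ℝ → Matrix (Fin d) (Fin d) ℂ → Matrix (Fin d) (Fin d) ℂ)
    (hV0 : ∀ s : ℝ, 0 ≤ s → ∀ X, V s s X = X)
    (hV : ∀ s : ℝ, 0 ≤ s → ∀ X, ∀ t : ℝ, s ≤ t →
      HasDerivAt (fun τ => V s τ X) (gksl H L t (V s t X)) t) :
    ∀ ε > (0 : ℝ), ∀ δ > (0 : ℝ), ∀ t0 : ℝ, 0 ≤ t0 →
      ∃ ts : ℕ → ℝ, (∀ n, 0 ≤ ts n) ∧ (∀ n, ts n + δ < ts (n + 1)) ∧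
        ∀ n, |opNorm2' (V (ts n) (ts n + δ)) - opNorm2' (V t0 (t0 + δ))|
          < ε * δ * Real.exp (M0 * δ) := by
  intro ε hε δ hδ t0 ht0
  set K : ℝ := (d : ℝ) * M0 with hKdef
  have hK : 0 < K := by positivity
  -- pointwise HS bound for the generator
  have hgHS : ∀ t : ℝ, 0 ≤ t → ∀ X, hsNorm (gksl H L t X) ≤ M0 * hsNorm X := fun t ht X =>
    opNorm2_pointwise (gksl_continuous H L t) (gksl_smul H L t) (hbound t ht) X
  -- pointwise sup-norm bound for the generator
  have hgpt : ∀ t : ℝ, 0 ≤ t → ∀ X, ‖gksl H L t X‖ ≤ K * ‖X‖ := by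
    intro t ht X
    calc ‖gksl H L t X‖ ≤ hsNorm (gksl H L t X) := norm_le_hsNorm _
      _ ≤ M0 * hsNorm X := hgHS t ht X
      _ ≤ M0 * ((d:ℝ) * ‖X‖) := by
          apply mul_le_mul_of_nonneg_left (hsNorm_le X) hM0.le
      _ = K * ‖X‖ := by rw [hKdef]; ring
  -- Gronwall growth bound for the propagator
  have growth : ∀ s : ℝ, 0 ≤ s → ∀ A : Matrix (Fin d) (Fin d) ℂ, ∀ τ ∈ Set.Icc (0:ℝ) δ,
      ‖V s (s + τ) A‖ ≤ ‖A‖ * Real.exp (K * τ) := by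
    intro s hs A τ hτ
    have hmain := norm_le_gronwallBound_of_norm_deriv_right_le
      (f := fun t => V s t A) (f' := fun t => gksl H L t (V s t A))
      (δ := ‖A‖) (K := K) (ε := 0) (a := s) (b := s + δ)
      (fun t ht => (hV s hs A t ht.1).continuousAt.continuousWithinAt)
      (fun t ht => (hV s hs A t ht.1).hasDerivWithinAt)
      (by show ‖V s s A‖ ≤ ‖A‖; rw [hV0 s hs A])
      (fun t ht => by rw [add_zero]; exact hgpt t (hs.trans ht.1) _)
    have h2 := hmain (s + τ) ⟨by linarith [hτ.1], by linarith [hτ.2]⟩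
    rwa [add_sub_cancel_left, gronwallBound_ε0] at h2
  set T : ℝ := ε * δ * Real.exp (M0 * δ) with hTdef
  have hT : 0 < T := by positivity
  have hexp1 : (1:ℝ) ≤ Real.exp (K * δ) := Real.one_le_exp (by positivity)
  set Cst : ℝ := (d:ℝ)^2 * Real.exp (K*δ) * (Real.exp (K*δ) - 1) / K with hCstdef
  have hCst : 0 ≤ Cst := by
    apply div_nonneg _ hK.le
    have : (0:ℝ) ≤ Real.exp (K*δ) - 1 := by linarith
    positivity
  set ε' : ℝ := T / (Cst + 1) with hε'def
  have hε' : 0 < ε' := by positivity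
  have hεCst : ε' * Cst < T := by
    rw [hε'def, div_mul_eq_mul_div, div_lt_iff₀ (by linarith)]
    nlinarith
  obtain ⟨ts, hts0, hts1, hts2⟩ := hquasi ε' hε' δ hδ t0 ht0
  refine ⟨ts, hts0, hts1, fun n => ?_⟩
  set s1 : ℝ := ts n with hs1def
  have hs1 : 0 ≤ s1 := hts0 n
  set C : ℝ := ε' * d * Real.exp (K * δ) with hCdef
  -- key difference bound
  have key : ∀ A : Matrix (Fin d) (Fin d) ℂ, hsNorm A = 1 →
      hsNorm (V s1 (s1 + δ) A - V t0 (t0 + δ) A) ≤ ε' * Cst := by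
    intro A hA
    have hAn : ‖A‖ ≤ 1 := (norm_le_hsNorm A).trans_eq hA
    have hDn : ∀ τ : ℝ, 0 ≤ τ → HasDerivAt (fun τ => V s1 (s1 + τ) A)
        (gksl H L (s1 + τ) (V s1 (s1 + τ) A)) τ := fun τ hτ =>
      hasDerivAt_shift _ _ s1 τ (hV s1 hs1 A (s1 + τ) (le_add_of_nonneg_right hτ))
    have hD0 : ∀ τ : ℝ, 0 ≤ τ → HasDerivAt (fun τ => V t0 (t0 + τ) A)
        (gksl H L (t0 + τ) (V t0 (t0 + τ) A)) τ := fun τ hτ =>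
      hasDerivAt_shift _ _ t0 τ (hV t0 ht0 A (t0 + τ) (le_add_of_nonneg_right hτ))
    have hG := norm_le_gronwallBound_of_norm_deriv_right_le
      (f := fun τ => V s1 (s1 + τ) A - V t0 (t0 + τ) A)
      (f' := fun τ => gksl H L (s1 + τ) (V s1 (s1 + τ) A)
        - gksl H L (t0 + τ) (V t0 (t0 + τ) A))
      (δ := 0) (K := K) (ε := C) (a := 0) (b := δ)
      (fun τ hτ => (((hDn τ hτ.1).sub (hD0 τ hτ.1)).continuousAt).continuousWithinAt)
      (fun τ hτ => ((hDn τ hτ.1).sub (hD0 τ hτ.1)).hasDerivWithinAt)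
      (by simp [hV0 s1 hs1 A, hV0 t0 ht0 A])
      ?_
    · have h2 := hG δ ⟨le_refl 0 |>.trans hδ.le, le_refl δ⟩
      have h3 : gronwallBound 0 K C (δ - 0) = C / K * (Real.exp (K * δ) - 1) := by
        rw [gronwallBound_of_K_ne_0 hK.ne', sub_zero]; ring
      rw [h3] at h2
      calc hsNorm (V s1 (s1 + δ) A - V t0 (t0 + δ) A)
          ≤ (d:ℝ) * ‖V s1 (s1 + δ) A - V t0 (t0 + δ) A‖ := hsNorm_le _
        _ ≤ (d:ℝ) * (C / K * (Real.exp (K * δ) - 1)) := by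
            apply mul_le_mul_of_nonneg_left h2 (by positivity)
        _ = ε' * Cst := by rw [hCdef, hCstdef]; field_simp
    · -- the derivative bound
      intro τ hτ
      have hτ0 : 0 ≤ τ := hτ.1
      have hτδ : τ ≤ δ := hτ.2.le
      show ‖gksl H L (s1 + τ) (V s1 (s1 + τ) A) - gksl H L (t0 + τ) (V t0 (t0 + τ) A)‖
        ≤ K * ‖V s1 (s1 + τ) A - V t0 (t0 + τ) A‖ + C
      set Xn := V s1 (s1 + τ) A with hXn
      set X0 := V t0 (t0 + τ) A with hX0
      have hsplit : gksl H L (s1 + τ) Xn - gksl H L (t0 + τ) X0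
          = gksl H L (s1 + τ) (Xn - X0)
            + (gksl H L (s1 + τ) X0 - gksl H L (t0 + τ) X0) := by
        rw [gksl_sub]; abel
      rw [hsplit]
      have h1 : ‖gksl H L (s1 + τ) (Xn - X0)‖ ≤ K * ‖Xn - X0‖ :=
        hgpt (s1 + τ) (by linarith) _
      have hdiffmap : ‖gksl H L (s1 + τ) X0 - gksl H L (t0 + τ) X0‖ ≤ C := by
        have hcont : Continuous (fun B => gksl H L (s1 + τ) B - gksl H L (t0 + τ) B) :=
          (gksl_continuous H L _).sub (gksl_continuous H L _)
        have hhom : ∀ (c : ℂ) X, (fun B => gksl H L (s1 + τ) B - gksl H L (t0 + τ) B) (c • X)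
            = c • (fun B => gksl H L (s1 + τ) B - gksl H L (t0 + τ) B) X := by
          intro c X; simp only [gksl_smul, smul_sub]
        have hop := (hts2 n τ ⟨hτ0, hτδ⟩).le
        have hb := opNorm2_pointwise hcont hhom hop X0
        have hX0n : ‖X0‖ ≤ Real.exp (K * τ) := by
          have := growth t0 ht0 A τ ⟨hτ0, hτδ⟩
          calc ‖X0‖ ≤ ‖A‖ * Real.exp (K * τ) := this
            _ ≤ 1 * Real.exp (K * τ) := by
                apply mul_le_mul_of_nonneg_right hAn (Real.exp_nonneg _)
            _ = Real.exp (K * τ) := one_mul _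
        have hexpτ : Real.exp (K * τ) ≤ Real.exp (K * δ) :=
          Real.exp_le_exp.mpr (by nlinarith)
        calc ‖gksl H L (s1 + τ) X0 - gksl H L (t0 + τ) X0‖
            ≤ hsNorm (gksl H L (s1 + τ) X0 - gksl H L (t0 + τ) X0) := norm_le_hsNorm _
          _ ≤ ε' * hsNorm X0 := hb
          _ ≤ ε' * ((d:ℝ) * ‖X0‖) := mul_le_mul_of_nonneg_left (hsNorm_le X0) hε'.le
          _ ≤ ε' * ((d:ℝ) * Real.exp (K * δ)) := by
              apply mul_le_mul_of_nonneg_left _ hε'.le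
              apply mul_le_mul_of_nonneg_left (hX0n.trans hexpτ) (by positivity)
          _ = C := by rw [hCdef]; ring
      calc ‖gksl H L (s1 + τ) (Xn - X0) + (gksl H L (s1 + τ) X0 - gksl H L (t0 + τ) X0)‖
          ≤ ‖gksl H L (s1 + τ) (Xn - X0)‖ + ‖gksl H L (s1 + τ) X0 - gksl H L (t0 + τ) X0‖ :=
            norm_add_le _ _
        _ ≤ K * ‖Xn - X0‖ + C := add_le_add h1 hdiffmap
  -- from the key bound to the sSup bound
  have hBoundN : ∀ r ∈ {r : ℝ | ∃ A, hsNorm A = 1 ∧ Matrix.trace A = 0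
      ∧ r = hsNorm (V s1 (s1 + δ) A)}, r ≤ (d:ℝ) * Real.exp (K * δ) := by
    rintro r ⟨A, hA1, _, rfl⟩
    have hAn : ‖A‖ ≤ 1 := (norm_le_hsNorm A).trans_eq hA1
    calc hsNorm (V s1 (s1 + δ) A) ≤ (d:ℝ) * ‖V s1 (s1 + δ) A‖ := hsNorm_le _
      _ ≤ (d:ℝ) * (‖A‖ * Real.exp (K * δ)) := by
          apply mul_le_mul_of_nonneg_left
            (growth s1 hs1 A δ ⟨hδ.le, le_refl δ⟩) (by positivity)
      _ ≤ (d:ℝ) * Real.exp (K * δ) := by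
          have hh : ‖A‖ * Real.exp (K * δ) ≤ Real.exp (K * δ) := by
            nlinarith [Real.exp_nonneg (K * δ)]
          exact mul_le_mul_of_nonneg_left hh (Nat.cast_nonneg d)
  have hBound0 : ∀ r ∈ {r : ℝ | ∃ A, hsNorm A = 1 ∧ Matrix.trace A = 0
      ∧ r = hsNorm (V t0 (t0 + δ) A)}, r ≤ (d:ℝ) * Real.exp (K * δ) := by
    rintro r ⟨A, hA1, _, rfl⟩
    have hAn : ‖A‖ ≤ 1 := (norm_le_hsNorm A).trans_eq hA1
    calc hsNorm (V t0 (t0 + δ) A) ≤ (d:ℝ) * ‖V t0 (t0 + δ) A‖ := hsNorm_le _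
      _ ≤ (d:ℝ) * (‖A‖ * Real.exp (K * δ)) := by
          apply mul_le_mul_of_nonneg_left
            (growth t0 ht0 A δ ⟨hδ.le, le_refl δ⟩) (by positivity)
      _ ≤ (d:ℝ) * Real.exp (K * δ) := by
          have hh : ‖A‖ * Real.exp (K * δ) ≤ Real.exp (K * δ) := by
            nlinarith [Real.exp_nonneg (K * δ)]
          exact mul_le_mul_of_nonneg_left hh (Nat.cast_nonneg d)
  show |opNorm2' (V s1 (s1 + δ)) - opNorm2' (V t0 (t0 + δ))| < T
  unfold opNorm2'
  by_cases hne : ∃ A : Matrix (Fin d) (Fin d) ℂ, hsNorm A = 1 ∧ Matrix.trace A = 0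
  · obtain ⟨A0, hA01, hA02⟩ := hne
    have hNeN : {r : ℝ | ∃ A, hsNorm A = 1 ∧ Matrix.trace A = 0
        ∧ r = hsNorm (V s1 (s1 + δ) A)}.Nonempty := ⟨_, A0, hA01, hA02, rfl⟩
    have hNe0 : {r : ℝ | ∃ A, hsNorm A = 1 ∧ Matrix.trace A = 0
        ∧ r = hsNorm (V t0 (t0 + δ) A)}.Nonempty := ⟨_, A0, hA01, hA02, rfl⟩
    have hBddN : BddAbove {r : ℝ | ∃ A, hsNorm A = 1 ∧ Matrix.trace A = 0
        ∧ r = hsNorm (V s1 (s1 + δ) A)} := ⟨_, hBoundN⟩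
    have hBdd0 : BddAbove {r : ℝ | ∃ A, hsNorm A = 1 ∧ Matrix.trace A = 0
        ∧ r = hsNorm (V t0 (t0 + δ) A)} := ⟨_, hBound0⟩
    have h1 : sSup {r : ℝ | ∃ A, hsNorm A = 1 ∧ Matrix.trace A = 0
        ∧ r = hsNorm (V s1 (s1 + δ) A)} ≤ sSup {r : ℝ | ∃ A, hsNorm A = 1
        ∧ Matrix.trace A = 0 ∧ r = hsNorm (V t0 (t0 + δ) A)} + ε' * Cst := by
      apply csSup_le hNeN
      rintro r ⟨A, hA1, hA2, rfl⟩
      have hk := key A hA1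
      have htri := abs_hsNorm_sub_hsNorm_le (V s1 (s1 + δ) A) (V t0 (t0 + δ) A)
      have hmem' : hsNorm (V t0 (t0 + δ) A) ∈ {r : ℝ | ∃ B, hsNorm B = 1
          ∧ Matrix.trace B = 0 ∧ r = hsNorm (V t0 (t0 + δ) B)} := ⟨A, hA1, hA2, rfl⟩
      have hmem := le_csSup hBdd0 hmem'
      have := abs_le.mp (htri.trans hk)
      linarith [this.2]
    have h2 : sSup {r : ℝ | ∃ A, hsNorm A = 1 ∧ Matrix.trace A = 0
        ∧ r = hsNorm (V t0 (t0 + δ) A)} ≤ sSup {r : ℝ | ∃ A, hsNorm A = 1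
        ∧ Matrix.trace A = 0 ∧ r = hsNorm (V s1 (s1 + δ) A)} + ε' * Cst := by
      apply csSup_le hNe0
      rintro r ⟨A, hA1, hA2, rfl⟩
      have hk := key A hA1
      have htri := abs_hsNorm_sub_hsNorm_le (V s1 (s1 + δ) A) (V t0 (t0 + δ) A)
      have hmem' : hsNorm (V s1 (s1 + δ) A) ∈ {r : ℝ | ∃ B, hsNorm B = 1
          ∧ Matrix.trace B = 0 ∧ r = hsNorm (V s1 (s1 + δ) B)} := ⟨A, hA1, hA2, rfl⟩
      have hmem := le_csSup hBddN hmem'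
      have := abs_le.mp (htri.trans hk)
      linarith [this.1]
    rw [abs_sub_lt_iff]
    constructor <;> linarith
  · push_neg at hne
    have hEmptyN : {r : ℝ | ∃ A, hsNorm A = 1 ∧ Matrix.trace A = 0
        ∧ r = hsNorm (V s1 (s1 + δ) A)} = ∅ := by
      ext r; simp only [Set.mem_setOf_eq, Set.mem_empty_iff_false, iff_false]
      rintro ⟨A, hA1, hA2, _⟩; exact hne A hA1 hA2
    have hEmpty0 : {r : ℝ | ∃ A, hsNorm A = 1 ∧ Matrix.trace A = 0
        ∧ r = hsNorm (V t0 (t0 + δ) A)} = ∅ := by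
      ext r; simp only [Set.mem_setOf_eq, Set.mem_empty_iff_false, iff_false]
      rintro ⟨A, hA1, hA2, _⟩; exact hne A hA1 hA2
    rw [hEmptyN, hEmpty0, Real.sSup_empty, sub_self, abs_zero]
    exact hT
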